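/- Majorant for the N-body solution (Theorem 3.3, first part): The formal power series solution (q, v) of the N-body equations with regular initial data satisfies q_i − q_j ⊴ ‖q_i⁰ − q_j⁰‖·ρ for all 1 ≤ i < j ≤ N, where ρ ∈ ℝ₊[[t]] is the unique formal power series solution of ρ'' = ν(q⁰)·ρ·(2 − ρ²)^{−3/2}, ρ(0) = 1, ρ'(0) = μ(q⁰, v⁰), and all coefficients of ρ are nonnegative. -/

import Mathlib

open scoped RealInnerProductSpace
open Finset

noncomputable section

/-- `p = g^ν` formally: `p₀ = 1` and the recurrence coming from `p'·g = ν·p·g'`. -/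
def IsFPow (g p : ℕ → ℝ) (ν : ℝ) : Prop :=
  p 0 = 1 ∧ ∀ k : ℕ, 1 ≤ k →
    p k = (1 / (k : ℝ)) *
      ∑ j ∈ Finset.range k, ((((k - j : ℕ) : ℝ)) * ν - (j : ℝ)) * g (k - j) * p j

/-- Cauchy product of two scalar power series (coefficientwise). -/
def cauchy (a b : ℕ → ℝ) (k : ℕ) : ℝ := ∑ j ∈ Finset.range (k + 1), a j * b (k - j)

/-- `K_i(q⁰) = Σ_{j≠i} G m_j / ‖q_i⁰ − q_j⁰‖²`. -/
def Kcoef {N : ℕ} (G : ℝ) (m : Fin N → ℝ) (q0 : Fin N → EuclideanSpace ℝ (Fin 3))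
    (i : Fin N) : ℝ :=
  ∑ j ∈ Finset.univ.erase i, G * m j / ‖q0 i - q0 j‖ ^ 2


/-! The recurrences for `ρ` and for `P = (2 − ρ²)^{−3/2}` only add and multiply nonnegative
numbers, so their coefficients are nonnegative. If `‖q_i − q_j‖` is dominated by `r ρ` with
`r = ‖q_i⁰ − q_j⁰‖` up to order `n`, then `‖q_i − q_j‖²/r²` is dominated by `ρ²` there, hence
`(‖q_i − q_j‖²/r²)^{−3/2}` by `(2 − ρ²)^{−3/2}`, since the series `(1 − x)^{−3/2}` has
nonnegative coefficients. The force `g_i − g_j` is then dominated by `(K_i + K_j) ρ P ⊴ ν r ρ P`,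
which is the majorant of `r ρ''`, so the domination passes to order `n + 2`. -/

lemma natCast_sub_mul_sub_natCast_nonpos {ν : ℝ} (hν : ν ≤ 0) (k j : ℕ) :
    ((k - j : ℕ) : ℝ) * ν - j ≤ 0 := by
  nlinarith [Nat.cast_nonneg (α := ℝ) (k - j), Nat.cast_nonneg (α := ℝ) j]

theorem IsFPow.nonneg {g p : ℕ → ℝ} {ν : ℝ} (hp : IsFPow g p ν) (hν : ν ≤ 0) (k : ℕ)
    (hg : ∀ j, 1 ≤ j → j ≤ k → g j ≤ 0) : 0 ≤ p k := by
  induction k using Nat.strong_induction_on with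
  | _ k IH =>
  rcases Nat.eq_zero_or_pos k with rfl | hk
  · simp [hp.1]
  rw [hp.2 k hk]
  refine mul_nonneg (by positivity) (sum_nonneg fun j hj => ?_)
  have hj := mem_range.1 hj
  exact mul_nonneg
    (mul_nonneg_of_nonpos_of_nonpos (natCast_sub_mul_sub_natCast_nonpos hν k j)
      (hg _ (by omega) (by omega)))
    (IH j hj fun a ha ha' => hg a ha (by omega))

theorem IsFPow.abs_le {g h p P : ℕ → ℝ} {ν : ℝ} (hp : IsFPow g p ν) (hP : IsFPow h P ν)
    (hν : ν ≤ 0) (k : ℕ) (hgh : ∀ j, 1 ≤ j → j ≤ k → |g j| ≤ -h j) : |p k| ≤ P k := by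
  induction k using Nat.strong_induction_on with
  | _ k IH =>
  rcases Nat.eq_zero_or_pos k with rfl | hk
  · simp [hp.1, hP.1]
  rw [hp.2 k hk, hP.2 k hk, abs_mul, abs_of_pos (by positivity : (0 : ℝ) < 1 / k)]
  refine mul_le_mul_of_nonneg_left ((abs_sum_le_sum_abs _ _).trans
    (sum_le_sum fun j hj => ?_)) (by positivity)
  have hj := mem_range.1 hj
  set c : ℝ := ((k - j : ℕ) : ℝ) * ν - j
  have hc : c ≤ 0 := natCast_sub_mul_sub_natCast_nonpos hν k j
  have hg := hgh (k - j) (by omega) (by omega)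
  have hpj := IH j hj fun a ha ha' => hgh a ha (by omega)
  rw [abs_mul, abs_mul, abs_of_nonpos hc]
  calc -c * |g (k - j)| * |p j| ≤ -c * -h (k - j) * P j := by
        gcongr
        · exact mul_nonneg (neg_nonneg.2 hc) ((abs_nonneg _).trans hg)
        · linarith
    _ = c * h (k - j) * P j := by ring

lemma cauchy_nonneg {a b : ℕ → ℝ} {k : ℕ} (ha : ∀ j ≤ k, 0 ≤ a j) (hb : ∀ j ≤ k, 0 ≤ b j) :
    0 ≤ cauchy a b k :=
  sum_nonneg fun j hj =>
    mul_nonneg (ha j (Nat.lt_succ_iff.1 (mem_range.1 hj))) (hb _ (Nat.sub_le _ _))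

lemma cauchy_comm (a b : ℕ → ℝ) (k : ℕ) : cauchy a b k = cauchy b a k := by
  simp only [cauchy, ← Nat.sum_antidiagonal_eq_sum_range_succ (fun i j => a i * b j),
    ← Nat.sum_antidiagonal_eq_sum_range_succ (fun i j => b i * a j)]
  rw [← Nat.sum_antidiagonal_swap]
  simp [mul_comm]

lemma norm_sum_range_le_mul_cauchy {E : Type*} [SeminormedAddCommGroup E] {t : ℕ → E}
    {A B : ℕ → ℝ} {C : ℝ} {k : ℕ} (h : ∀ a ≤ k, ‖t a‖ ≤ C * (A a * B (k - a))) :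
    ‖∑ a ∈ range (k + 1), t a‖ ≤ C * cauchy A B k := by
  rw [cauchy, mul_sum]
  exact (norm_sum_le _ _).trans
    (sum_le_sum fun a ha => h a (Nat.lt_succ_iff.1 (mem_range.1 ha)))

lemma norm_sum_smul_le_mul_cauchy {E : Type*} [SeminormedAddCommGroup E] [NormedSpace ℝ E]
    {w P ρ : ℕ → ℝ} {y : ℕ → E} {r : ℝ} {n : ℕ} (hw : ∀ a ≤ n, |w a| ≤ P a)
    (hy : ∀ c ≤ n, ‖y c‖ ≤ r * ρ c) :
    ‖∑ a ∈ range (n + 1), w a • y (n - a)‖ ≤ r * cauchy P ρ n := by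
  refine norm_sum_range_le_mul_cauchy fun a ha => ?_
  have hwa := hw a ha
  rw [norm_smul, Real.norm_eq_abs]
  calc |w a| * ‖y (n - a)‖ ≤ P a * (r * ρ (n - a)) :=
        mul_le_mul hwa (hy _ (Nat.sub_le _ _)) (norm_nonneg _) ((abs_nonneg _).trans hwa)
    _ = r * (P a * ρ (n - a)) := by ring

section Majorant

variable {ρ P : ℕ → ℝ}

lemma majorant_coeff_nonneg {ν : ℝ} (hν : 0 ≤ ν)
    (hP : IsFPow (fun k => if k = 0 then 1 else -(cauchy ρ ρ k)) P (-(3 / 2)))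
    (hρ0 : 0 ≤ ρ 0) (hρ1 : 0 ≤ ρ 1)
    (hρrec : ∀ k : ℕ, (((k : ℝ) + 2) * ((k : ℝ) + 1)) * ρ (k + 2) = ν * cauchy ρ P k)
    (k : ℕ) : 0 ≤ ρ k ∧ 0 ≤ P k := by
  induction k using Nat.strong_induction_on with
  | _ k IH =>
  have hρk : 0 ≤ ρ k := by
    match k, IH with
    | 0, _ => exact hρ0
    | 1, _ => exact hρ1
    | n + 2, IH =>
      have hC : 0 ≤ cauchy ρ P n :=
        cauchy_nonneg (fun j _ => (IH j (by omega)).1) (fun j _ => (IH j (by omega)).2)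
      refine nonneg_of_mul_nonneg_right ?_ (by positivity : (0 : ℝ) < (n + 2) * (n + 1))
      exact hρrec n ▸ mul_nonneg hν hC
  have hρle : ∀ a ≤ k, 0 ≤ ρ a := fun a ha =>
    ha.eq_or_lt.elim (fun h => h ▸ hρk) fun h => (IH a h).1
  refine ⟨hρk, hP.nonneg (by norm_num) k fun j hj hjk => ?_⟩
  rw [if_neg (by omega), neg_nonpos]
  exact cauchy_nonneg (fun a ha => hρle a (by omega)) (fun a _ => hρle _ (by omega))

/-- A relative distance dominated by `ρ` has its `−3/2` power dominated by `(2 − ρ²)^{−3/2}`. -/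
lemma abs_le_of_isFPow_inner {E : Type*} [NormedAddCommGroup E] [InnerProductSpace ℝ E]
    {x : ℕ → E} {w : ℕ → ℝ} (hx0 : 0 < ‖x 0‖)
    (hw : IsFPow (fun k => (∑ a ∈ range (k + 1), ⟪x a, x (k - a)⟫) / ‖x 0‖ ^ 2) w (-(3 / 2)))
    (hP : IsFPow (fun k => if k = 0 then 1 else -(cauchy ρ ρ k)) P (-(3 / 2)))
    {n : ℕ} (hx : ∀ c ≤ n, ‖x c‖ ≤ ‖x 0‖ * ρ c) : |w n| ≤ P n := by
  refine hw.abs_le hP (by norm_num) n fun j hj hjn => ?_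
  rw [if_neg (by omega), neg_neg, abs_div, abs_of_pos (pow_pos hx0 2),
    div_le_iff₀ (pow_pos hx0 2), mul_comm, ← Real.norm_eq_abs]
  refine norm_sum_range_le_mul_cauchy fun c hc => ?_
  calc ‖⟪x c, x (j - c)⟫‖ ≤ ‖x c‖ * ‖x (j - c)‖ := norm_inner_le_norm _ _
    _ ≤ (‖x 0‖ * ρ c) * (‖x 0‖ * ρ (j - c)) :=
        mul_le_mul (hx c (by omega)) (hx _ (by omega)) (norm_nonneg _)
          ((norm_nonneg _).trans (hx c (by omega)))
    _ = ‖x 0‖ ^ 2 * (ρ c * ρ (j - c)) := by ring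

end Majorant

lemma smul_coeff_add_two {E : Type*} [AddCommGroup E] [Module ℝ E] {q v g : ℕ → E}
    (hq : ∀ k : ℕ, ((k : ℝ) + 1) • q (k + 1) = v k)
    (hv : ∀ k : ℕ, ((k : ℝ) + 1) • v (k + 1) = g k) (n : ℕ) :
    (((n : ℝ) + 2) * ((n : ℝ) + 1)) • q (n + 2) = g n := by
  rw [← hv, ← hq, smul_smul]
  congr 1
  push_cast
  ring

lemma norm_sub_coeff_add_two_le {ι E : Type*} [SeminormedAddCommGroup E] [NormedSpace ℝ E]
    {q : ι → ℕ → E} {F : ι → E} {K : ι → ℝ} {ρ : ℕ → ℝ} {C ν : ℝ} {n : ℕ}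
    (hq : ∀ l, (((n : ℝ) + 2) * ((n : ℝ) + 1)) • q l (n + 2) = F l)
    (hF : ∀ l, ‖F l‖ ≤ K l * C) (hC : 0 ≤ C) {i j : ι}
    (hK : K i + K j ≤ ν * ‖q i 0 - q j 0‖)
    (hρ : (((n : ℝ) + 2) * ((n : ℝ) + 1)) * ρ (n + 2) = ν * C) :
    ‖q i (n + 2) - q j (n + 2)‖ ≤ ‖q i 0 - q j 0‖ * ρ (n + 2) := by
  have hc : (0 : ℝ) < ((n : ℝ) + 2) * ((n : ℝ) + 1) := by positivity
  refine le_of_mul_le_mul_left ?_ hc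
  calc ((n : ℝ) + 2) * ((n : ℝ) + 1) * ‖q i (n + 2) - q j (n + 2)‖ = ‖F i - F j‖ := by
        rw [← hq, ← hq, ← smul_sub, norm_smul, Real.norm_of_nonneg hc.le]
    _ ≤ ‖F i‖ + ‖F j‖ := norm_sub_le _ _
    _ ≤ (K i + K j) * C := by
        rw [add_mul]
        exact add_le_add (hF i) (hF j)
    _ ≤ ν * ‖q i 0 - q j 0‖ * C := mul_le_mul_of_nonneg_right hK hC
    _ = ((n : ℝ) + 2) * ((n : ℝ) + 1) * (‖q i 0 - q j 0‖ * ρ (n + 2)) := by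
        rw [mul_right_comm, ← hρ]
        ring

lemma le_mul_norm_sub_of_div_le {ι E : Type*} [LinearOrder ι] [SeminormedAddCommGroup E]
    {a : ι → ι → ℝ} {y : ι → E} {c : ℝ} (ha : ∀ i j, a i j = a j i)
    (hy : ∀ i j, i ≠ j → 0 < ‖y i - y j‖) (h : ∀ i j, i < j → a i j / ‖y i - y j‖ ≤ c)
    {i j : ι} (hij : i ≠ j) : a i j ≤ c * ‖y i - y j‖ := by
  rcases hij.lt_or_gt with hlt | hgt
  · exact (div_le_iff₀ (hy i j hij)).1 (h i j hlt)
  · rw [ha, norm_sub_rev]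
    exact (div_le_iff₀ (hy j i hij.symm)).1 (h j i hgt)

lemma Kcoef_nonneg {N : ℕ} {G : ℝ} {m : Fin N → ℝ} (hG : 0 ≤ G) (hm : ∀ j, 0 ≤ m j)
    (q0 : Fin N → EuclideanSpace ℝ (Fin 3)) (i : Fin N) : 0 ≤ Kcoef G m q0 i :=
  sum_nonneg fun j _ => div_nonneg (mul_nonneg hG (hm j)) (by positivity)

lemma norm_force_coeff_le {N : ℕ} {G : ℝ} {m : Fin N → ℝ}
    {q gser : Fin N → ℕ → EuclideanSpace ℝ (Fin 3)} {w : Fin N → Fin N → ℕ → ℝ} {ρ P : ℕ → ℝ}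
    (hG : 0 ≤ G) (hm : ∀ j, 0 ≤ m j) (hr : ∀ i j : Fin N, i ≠ j → 0 < ‖q i 0 - q j 0‖)
    (hw : ∀ i j : Fin N, i ≠ j →
      IsFPow (fun k =>
        (∑ a ∈ range (k + 1), ⟪q i a - q j a, q i (k - a) - q j (k - a)⟫) / ‖q i 0 - q j 0‖ ^ 2)
        (w i j) (-(3 / 2)))
    (hP : IsFPow (fun k => if k = 0 then 1 else -(cauchy ρ ρ k)) P (-(3 / 2)))
    (hgser : ∀ i k, gser i k =
      ∑ j ∈ univ.erase i, (G * m j / ‖q i 0 - q j 0‖ ^ 3) •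
        (∑ a ∈ range (k + 1), w i j a • (q j (k - a) - q i (k - a))))
    {i : Fin N} {n : ℕ}
    (hpair : ∀ l, l ≠ i → ∀ a ≤ n, ‖q i a - q l a‖ ≤ ‖q i 0 - q l 0‖ * ρ a) :
    ‖gser i n‖ ≤ Kcoef G m (fun l => q l 0) i * cauchy ρ P n := by
  rw [hgser, Kcoef, sum_mul]
  refine (norm_sum_le _ _).trans (sum_le_sum fun l hl => ?_)
  have hli : l ≠ i := ne_of_mem_erase hl
  have hril := hr i l hli.symm
  have hwl : ∀ a ≤ n, |w i l a| ≤ P a := fun a ha =>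
    abs_le_of_isFPow_inner (x := fun a => q i a - q l a) hril (hw i l hli.symm) hP
      fun c hc => hpair l hli c (by omega)
  have hy : ∀ c ≤ n, ‖q l c - q i c‖ ≤ ‖q i 0 - q l 0‖ * ρ c := fun c hc =>
    norm_sub_rev (q i c) (q l c) ▸ hpair l hli c hc
  have hcoef : 0 ≤ G * m l / ‖q i 0 - q l 0‖ ^ 3 :=
    div_nonneg (mul_nonneg hG (hm l)) (by positivity)
  rw [norm_smul, Real.norm_of_nonneg hcoef]
  calc _ ≤ G * m l / ‖q i 0 - q l 0‖ ^ 3 * (‖q i 0 - q l 0‖ * cauchy P ρ n) :=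
        mul_le_mul_of_nonneg_left (norm_sum_smul_le_mul_cauchy hwl hy) hcoef
    _ = G * m l / ‖q i 0 - q l 0‖ ^ 2 * cauchy ρ P n := by
        rw [cauchy_comm]
        field_simp

/-- Majorant for the N-body solution (Theorem 3.3, first part): the formal power series
solution `(q, v)` of the N-body equations with regular initial data satisfies
`q_i − q_j ⊴ ‖q_i⁰ − q_j⁰‖ ρ` for all `i < j`, where `ρ` is the unique formal power
series solution of `ρ'' = ν(q⁰) ρ (2 − ρ²)^{−3/2}`, `ρ(0) = 1`, `ρ'(0) = μ(q⁰,v⁰)`,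
and all coefficients of `ρ` are nonnegative. `P = (2 − ρ²)^{−3/2}` formally. -/
theorem majorant_nbody_solution {N : ℕ} (G : ℝ) (m : Fin N → ℝ)
    (q v gser : Fin N → ℕ → EuclideanSpace ℝ (Fin 3))
    (w : Fin N → Fin N → ℕ → ℝ) (ρ P : ℕ → ℝ) (μ0 ν0 : ℝ)
    (hG : 0 < G) (hm : ∀ j, 0 < m j)
    (hsep : ∀ i j : Fin N, i ≠ j → q i 0 ≠ q j 0)
    -- `w i j = (‖q_i − q_j‖²/‖q_i⁰ − q_j⁰‖²)^{−3/2}` as a formal power series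
    (hw : ∀ i j : Fin N, i ≠ j →
      IsFPow (fun k =>
        (∑ a ∈ Finset.range (k + 1),
          ⟪q i a - q j a, q i (k - a) - q j (k - a)⟫) / ‖q i 0 - q j 0‖ ^ 2)
        (w i j) (-(3 / 2)))
    -- `gser i` is the coefficient series of `g_i(q)`
    (hgser : ∀ i k, gser i k =
      ∑ j ∈ Finset.univ.erase i, (G * m j / ‖q i 0 - q j 0‖ ^ 3) •
        (∑ a ∈ Finset.range (k + 1), w i j a • (q j (k - a) - q i (k - a))))
    -- `(q, v)` is the formal power series solution of the N-body equations
    (hODEq : ∀ i, ∀ k : ℕ, ((k : ℝ) + 1) • q i (k + 1 : ℕ) = v i k)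
    (hODEv : ∀ i, ∀ k : ℕ, ((k : ℝ) + 1) • v i (k + 1 : ℕ) = gser i k)
    -- `μ0 = μ(q⁰,v⁰) = max_{i<j} ‖v_i⁰ − v_j⁰‖/‖q_i⁰ − q_j⁰‖`
    (hμ0ub : ∀ i j : Fin N, i < j → ‖v i 0 - v j 0‖ / ‖q i 0 - q j 0‖ ≤ μ0)
    (hμ0mem : ∃ i j : Fin N, i < j ∧ μ0 = ‖v i 0 - v j 0‖ / ‖q i 0 - q j 0‖)
    -- `ν0 = ν(q⁰) = max_{i<j} (K_i(q⁰)+K_j(q⁰))/‖q_i⁰ − q_j⁰‖`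
    (hν0ub : ∀ i j : Fin N, i < j →
      (Kcoef G m (fun l => q l 0) i + Kcoef G m (fun l => q l 0) j) / ‖q i 0 - q j 0‖ ≤ ν0)
    (hν0mem : ∃ i j : Fin N, i < j ∧
      ν0 = (Kcoef G m (fun l => q l 0) i + Kcoef G m (fun l => q l 0) j) / ‖q i 0 - q j 0‖)
    -- `P = (2 − ρ²)^{−3/2}` as a formal power series
    (hP : IsFPow (fun k => if k = 0 then 1 else -(cauchy ρ ρ k)) P (-(3 / 2)))
    -- `ρ` solves `ρ'' = ν0 ρ (2 − ρ²)^{−3/2}`, `ρ(0) = 1`, `ρ'(0) = μ0`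
    (hρ0 : ρ 0 = 1) (hρ1 : ρ 1 = μ0)
    (hρrec : ∀ k : ℕ,
      (((k : ℝ) + 2) * ((k : ℝ) + 1)) * ρ (k + 2 : ℕ) = ν0 * cauchy ρ P k) :
    (∀ k, 0 ≤ ρ k) ∧
      ∀ i j : Fin N, i < j → ∀ k, ‖q i k - q j k‖ ≤ ‖q i 0 - q j 0‖ * ρ k := by
  have hr : ∀ i j : Fin N, i ≠ j → 0 < ‖q i 0 - q j 0‖ := fun i j h =>
    norm_sub_pos_iff.2 (hsep i j h)
  have hK := Kcoef_nonneg hG.le (fun j => (hm j).le) (fun l => q l 0)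
  have hμ0 : 0 ≤ μ0 := by
    obtain ⟨i, j, -, h⟩ := hμ0mem
    exact h ▸ by positivity
  have hν0 : 0 ≤ ν0 := by
    obtain ⟨i, j, -, h⟩ := hν0mem
    exact h ▸ div_nonneg (add_nonneg (hK i) (hK j)) (norm_nonneg _)
  have hnn := majorant_coeff_nonneg hν0 hP (hρ0 ▸ zero_le_one) (hρ1 ▸ hμ0) hρrec
  suffices h : ∀ k, ∀ i j : Fin N, i ≠ j → ‖q i k - q j k‖ ≤ ‖q i 0 - q j 0‖ * ρ k from
    ⟨fun k => (hnn k).1, fun i j hij k => h k i j hij.ne⟩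
  intro k
  induction k using Nat.strong_induction_on with
  | _ k IH =>
  intro i j hij
  match k, IH with
  | 0, _ => rw [hρ0, mul_one]
  | 1, _ =>
    have hq1 : ∀ l, q l 1 = v l 0 := fun l => by simpa using hODEq l 0
    rw [hq1, hq1, hρ1, mul_comm]
    exact le_mul_norm_sub_of_div_le (a := fun i j => ‖v i 0 - v j 0‖)
      (fun _ _ => norm_sub_rev _ _) hr hμ0ub hij
  | n + 2, IH =>
    exact norm_sub_coeff_add_two_le (fun l => smul_coeff_add_two (hODEq l) (hODEv l) n)
      (fun l => norm_force_coeff_le hG.le (fun j => (hm j).le) hr hw hP hgser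
        fun l' hl' a _ => IH a (by omega) l l' hl'.symm)
      (cauchy_nonneg (fun a _ => (hnn a).1) (fun a _ => (hnn a).2))
      (le_mul_norm_sub_of_div_le
        (a := fun i j => Kcoef G m (fun l => q l 0) i + Kcoef G m (fun l => q l 0) j)
        (fun _ _ => add_comm _ _) hr hν0ub hij)
      (hρrec n)

end
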